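/- If P and Q are independent random variables each uniformly distributed on {1, 2, ..., m}, then the probability that gcd(P, Q) = 1 converges to 6/π² as m → ∞. -/

import Mathlib

/-!
Möbius inversion writes the number of coprime pairs in `{1,…,m}²` as `∑_{d ≤ m} μ(d) ⌊m/d⌋²`.
After dividing by `m²`, the `d`-th term tends to `μ(d)/d²` and is bounded by `1/d²`, so by
dominated convergence (Tannery's theorem) the ratio tends to `∑ μ(d)/d² = 1/ζ(2) = 6/π²`.
-/

open Filter Finset ArithmeticFunction
open scoped ArithmeticFunction.Moebius LSeries.notation

theorem sum_divisors_moebius (n : ℕ) :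
    ∑ d ∈ n.divisors, μ d = if n = 1 then 1 else 0 := by
  rw [← coe_mul_zeta_apply, moebius_mul_coe_zeta, one_apply]

theorem card_gcd_eq_one_Icc_prod (m n : ℕ) :
    (#{pq ∈ Icc 1 m ×ˢ Icc 1 n | Nat.gcd pq.1 pq.2 = 1} : ℤ) =
      ∑ d ∈ Icc 1 m, μ d * (m / d : ℕ) * (n / d : ℕ) := by
  calc (#{pq ∈ Icc 1 m ×ˢ Icc 1 n | Nat.gcd pq.1 pq.2 = 1} : ℤ)
      = ∑ pq ∈ Icc 1 m ×ˢ Icc 1 n, ∑ d ∈ (Nat.gcd pq.1 pq.2).divisors, μ d := by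
        simp only [sum_divisors_moebius, sum_boole]
    _ = ∑ d ∈ Icc 1 m, ∑ _pq ∈ {pq ∈ Icc 1 m ×ˢ Icc 1 n | d ∣ pq.1 ∧ d ∣ pq.2}, μ d := by
        refine sum_comm' fun pq d => ?_
        simp only [mem_product, mem_Icc, mem_filter, Nat.mem_divisors, Nat.dvd_gcd_iff]
        constructor
        · rintro ⟨⟨⟨hp1, hpm⟩, hq⟩, ⟨hdp, hdq⟩, -⟩
          exact ⟨⟨⟨⟨hp1, hpm⟩, hq⟩, hdp, hdq⟩,
            Nat.pos_of_dvd_of_pos hdp hp1, (Nat.le_of_dvd hp1 hdp).trans hpm⟩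
        · rintro ⟨⟨⟨hp, hq⟩, hdp, hdq⟩, -⟩
          exact ⟨⟨hp, hq⟩, ⟨hdp, hdq⟩, Nat.gcd_ne_zero_left (by omega)⟩
    _ = ∑ d ∈ Icc 1 m, μ d * (m / d : ℕ) * (n / d : ℕ) := by
        refine sum_congr rfl fun d _ => ?_
        have Icc_one_eq_Ioc_zero (k : ℕ) : Icc 1 k = Ioc 0 k := Icc_add_one_left_eq_Ioc 0 k
        rw [sum_const, filter_product (d ∣ ·) (d ∣ ·), card_product, Icc_one_eq_Ioc_zero,
          Icc_one_eq_Ioc_zero, Nat.Ioc_filter_dvd_card_eq_div, Nat.Ioc_filter_dvd_card_eq_div,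
          nsmul_eq_mul]
        push_cast
        ring

theorem natCast_div_div_le_one_div (m d : ℕ) : ((m / d : ℕ) : ℝ) / m ≤ 1 / d := by
  rcases eq_or_ne m 0 with rfl | hm
  · simp
  calc ((m / d : ℕ) : ℝ) / m ≤ (m / d : ℝ) / m := by gcongr; exact Nat.cast_div_le
    _ = 1 / d := by field_simp

theorem tendsto_natCast_div_div_atTop (d : ℕ) :
    Tendsto (fun m : ℕ => ((m / d : ℕ) : ℝ) / m) atTop (nhds (1 / d)) := by
  have lower : Tendsto (fun m : ℕ => 1 / (d : ℝ) - 1 / m) atTop (nhds (1 / d)) := by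
    simpa using (tendsto_const_nhds (x := 1 / (d : ℝ))).sub tendsto_one_div_atTop_nhds_zero_nat
  refine tendsto_of_tendsto_of_tendsto_of_le_of_le' lower tendsto_const_nhds ?_
    (Eventually.of_forall (natCast_div_div_le_one_div · d))
  filter_upwards [eventually_gt_atTop 0] with m hm
  have floor_gt := Nat.sub_one_lt_floor ((m : ℝ) / d)
  rw [Nat.floor_div_eq_div] at floor_gt
  rw [le_div_iff₀ (by positivity)]
  calc (1 / (d : ℝ) - 1 / m) * m = m / d - 1 := by field_simp
    _ ≤ _ := floor_gt.le

theorem LSeries_moebius_eq_inv_riemannZeta {s : ℂ} (hs : 1 < s.re) :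
    L ↗μ s = (riemannZeta s)⁻¹ := by
  rw [← LSeries_zeta_eq_riemannZeta hs]
  exact eq_inv_of_mul_eq_one_right (LSeries_zeta_mul_Lseries_moebius hs)

theorem hasSum_moebius_div_sq :
    HasSum (fun d : ℕ => (μ d : ℝ) / d ^ 2) (6 / Real.pi ^ 2) := by
  have h2 : (1 : ℝ) < (2 : ℂ).re := by norm_num
  have := (LSeriesSummable_moebius_iff.mpr h2).LSeriesHasSum
  unfold LSeriesHasSum at this
  rw [LSeries_moebius_eq_inv_riemannZeta h2, riemannZeta_two] at this
  rw [← Complex.hasSum_ofReal]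
  convert this using 1
  · funext d
    rcases eq_or_ne d 0 with rfl | hd
    · simp
    · simp [LSeries.term_of_ne_zero hd]
  · push_cast; ring

theorem card_gcd_eq_one_Icc_sq_div_sq_eq_tsum (m : ℕ) :
    (#{pq ∈ Icc 1 m ×ˢ Icc 1 m | Nat.gcd pq.1 pq.2 = 1} : ℝ) / (m : ℝ) ^ 2 =
      ∑' d : ℕ, (μ d : ℝ) * (((m / d : ℕ) : ℝ) / m) ^ 2 := by
  rw [tsum_eq_sum (s := Icc 1 m) fun d hd => ?_]
  · have count := congrArg (Int.cast : ℤ → ℝ) (card_gcd_eq_one_Icc_prod m m)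
    simp only [Int.cast_sum, Int.cast_mul, Int.cast_natCast] at count
    rw [count, sum_div]
    exact sum_congr rfl fun d _ => by ring
  · rw [mem_Icc] at hd
    rw [Nat.div_eq_zero_iff.mpr (by omega)]
    simp

theorem norm_moebius_mul_natCast_div_div_sq_le (m d : ℕ) :
    ‖(μ d : ℝ) * (((m / d : ℕ) : ℝ) / m) ^ 2‖ ≤ 1 / (d : ℝ) ^ 2 := by
  have abs_moebius : |(μ d : ℝ)| ≤ 1 := by exact_mod_cast abs_moebius_le_one
  rw [Real.norm_eq_abs, abs_mul, abs_pow, abs_of_nonneg (by positivity : (0 : ℝ) ≤ _ / _)]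
  calc |(μ d : ℝ)| * (((m / d : ℕ) : ℝ) / m) ^ 2 ≤ 1 * (1 / d) ^ 2 := by
        gcongr ?_ * ?_ ^ 2
        exact natCast_div_div_le_one_div m d
    _ = 1 / (d : ℝ) ^ 2 := by ring

/-- If `P` and `Q` are independent uniform random variables on `{1,…,m}`, the
probability that `gcd (P, Q) = 1` (i.e. the fraction of pairs in `{1,…,m}²` that are
coprime) tends to `6/π²` as `m → ∞`. -/
theorem prob_coprime_uniform_tendsto :
    Tendsto (fun m : ℕ =>
      (((Finset.Icc 1 m ×ˢ Finset.Icc 1 m).filter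
          (fun pq => Nat.gcd pq.1 pq.2 = 1)).card : ℝ) / (m : ℝ) ^ 2)
      atTop (nhds (6 / Real.pi ^ 2)) := by
  simp_rw [card_gcd_eq_one_Icc_sq_div_sq_eq_tsum, ← hasSum_moebius_div_sq.tsum_eq]
  refine tendsto_tsum_of_dominated_convergence (Real.summable_one_div_nat_pow.mpr one_lt_two)
    (fun d => ?_) (Eventually.of_forall (norm_moebius_mul_natCast_div_div_sq_le ·))
  convert ((tendsto_natCast_div_div_atTop d).pow 2).const_mul (μ d : ℝ) using 2
  ring
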